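/- Let f : ℝ³ → [0,+∞], f₀(z) = inf_{ζ∈ℝ} f(z,ζ), and let f₀** denote the convex lower semicontinuous envelope of f₀. Then Pr₂(co(dom f)) ⊆ dom(f₀**) ⊆ closure(Pr₂(co(dom f))). -/

import Mathlib

open scoped ENNReal

/-- A `[0,+∞]`-valued function is convex. -/
def ConvexENN {E : Type*} [AddCommGroup E] [Module ℝ E] (g : E → ℝ≥0∞) : Prop :=
  ∀ x y : E, ∀ a b : ℝ, 0 ≤ a → 0 ≤ b → a + b = 1 →
    g (a • x + b • y) ≤ ENNReal.ofReal a * g x + ENNReal.ofReal b * g y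

/-- The convex lower semicontinuous envelope `g**` of `g`: the greatest convex lower
semicontinuous function below `g`. -/
noncomputable def biconjENN {E : Type*} [AddCommGroup E] [Module ℝ E]
    [TopologicalSpace E] (g : E → ℝ≥0∞) : E → ℝ≥0∞ := fun z =>
  ⨆ φ : {φ : E → ℝ≥0∞ // (∀ x, φ x ≤ g x) ∧ ConvexENN φ ∧ LowerSemicontinuous φ},
    φ.1 z

/-- With `f₀(z) = inf_{ζ∈ℝ} f(z,ζ)` and `f₀**` its convex lsc envelope,
`Pr₂(co (dom f)) ⊆ dom (f₀**) ⊆ closure (Pr₂ (co (dom f)))`. -/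
theorem stmt_6 (f : ℝ × ℝ × ℝ → ℝ≥0∞) (hf : Measurable f) :
    (fun p : ℝ × ℝ × ℝ => (p.1, p.2.1)) '' (convexHull ℝ {p | f p < ⊤}) ⊆
        {z : ℝ × ℝ | biconjENN (fun z : ℝ × ℝ => ⨅ ζ : ℝ, f (z.1, z.2, ζ)) z < ⊤} ∧
      {z : ℝ × ℝ | biconjENN (fun z : ℝ × ℝ => ⨅ ζ : ℝ, f (z.1, z.2, ζ)) z < ⊤} ⊆
        closure ((fun p : ℝ × ℝ × ℝ => (p.1, p.2.1)) '' (convexHull ℝ {p | f p < ⊤})) := by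
  set f₀ : ℝ × ℝ → ℝ≥0∞ := fun z => ⨅ ζ : ℝ, f (z.1, z.2, ζ) with hf₀
  set g : (ℝ × ℝ) → ℝ≥0∞ := biconjENN f₀ with hg
  set L : ℝ × ℝ × ℝ → ℝ × ℝ := fun p => (p.1, p.2.1) with hL
  have hLlin : IsLinearMap ℝ L := ⟨fun x y => rfl, fun c x => rfl⟩
  -- g ≤ f₀
  have hle : ∀ z, g z ≤ f₀ z := fun z => iSup_le fun φ => φ.2.1 z
  -- g is convex
  have hconv : ConvexENN g := by
    intro x y a b ha hb hab
    refine iSup_le fun φ => (φ.2.2.1 x y a b ha hb hab).trans ?_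
    exact add_le_add (mul_le_mul_right (le_iSup (fun ψ : {φ : (ℝ × ℝ) → ℝ≥0∞ //
        (∀ x, φ x ≤ f₀ x) ∧ ConvexENN φ ∧ LowerSemicontinuous φ} => ψ.1 x) φ) _)
      (mul_le_mul_right (le_iSup (fun ψ : {φ : (ℝ × ℝ) → ℝ≥0∞ //
        (∀ x, φ x ≤ f₀ x) ∧ ConvexENN φ ∧ LowerSemicontinuous φ} => ψ.1 y) φ) _)
  -- the domain of g is convex
  have hdomconv : Convex ℝ {z : ℝ × ℝ | g z < ⊤} := by
    intro x hx y hy a b ha hb hab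
    refine (hconv x y a b ha hb hab).trans_lt ?_
    exact ENNReal.add_lt_top.2 ⟨ENNReal.mul_lt_top ENNReal.ofReal_lt_top hx,
      ENNReal.mul_lt_top ENNReal.ofReal_lt_top hy⟩
  constructor
  · -- first inclusion
    rintro z ⟨p, hp, rfl⟩
    have key : convexHull ℝ {p : ℝ × ℝ × ℝ | f p < ⊤} ⊆ L ⁻¹' {z : ℝ × ℝ | g z < ⊤} := by
      apply convexHull_min
      · intro q hq
        have h1 : g (L q) ≤ f₀ (L q) := hle _
        have h2 : f₀ (L q) ≤ f q := iInf_le (fun ζ => f (q.1, q.2.1, ζ)) q.2.2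
        exact (h1.trans h2).trans_lt hq
      · exact hdomconv.is_linear_preimage hLlin
    exact key hp
  · -- second inclusion
    classical
    set D : Set (ℝ × ℝ) := closure (L '' convexHull ℝ {p : ℝ × ℝ × ℝ | f p < ⊤}) with hD
    have hDconv : Convex ℝ D :=
      (((convex_convexHull ℝ _).is_linear_image hLlin)).closure
    have hDclosed : IsClosed D := isClosed_closure
    set φ₀ : ℝ × ℝ → ℝ≥0∞ := fun z => if z ∈ D then 0 else ⊤ with hφ₀
    have hmem : ∀ z, z ∈ D → φ₀ z = 0 := fun z hz => if_pos hz
    have hnmem : ∀ z, z ∉ D → φ₀ z = ⊤ := fun z hz => if_neg hz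
    -- φ₀ ≤ f₀
    have hφle : ∀ z, φ₀ z ≤ f₀ z := by
      intro z
      by_cases hz : z ∈ D
      · rw [hmem z hz]; exact zero_le
      · rw [hnmem z hz]
        by_contra hlt
        have hf0 : f₀ z < ⊤ := lt_of_le_of_ne (le_top) (fun h => hlt (h ▸ le_rfl))
        obtain ⟨ζ, hζ⟩ := iInf_lt_iff.1 hf0
        have : z ∈ D := by
          apply subset_closure
          exact ⟨(z.1, z.2, ζ), subset_convexHull ℝ _ hζ, rfl⟩
        exact hz this
    -- φ₀ convex
    have hφconv : ConvexENN φ₀ := by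
      intro x y a b ha hb hab
      by_cases hxy : a • x + b • y ∈ D
      · rw [hmem _ hxy]; exact zero_le
      · have hx : x ∉ D ∨ y ∉ D := by
          by_contra hc
          push_neg at hc
          exact hxy (hDconv hc.1 hc.2 ha hb hab)
        rcases hx with hx | hy
        · refine le_top.trans ?_
          rw [hnmem x hx]
          by_cases ha0 : a = 0
          · have hb1 : b = 1 := by linarith
            have hyD : y ∉ D := fun h => hxy (by
              have heq : a • x + b • y = y := by rw [ha0, hb1]; simp
              rwa [heq])
            rw [hnmem y hyD, hb1]
            simp
          · rw [ENNReal.mul_top (ENNReal.ofReal_pos.2 (ha.lt_of_ne (Ne.symm ha0))).ne',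
              top_add]
        · refine le_top.trans ?_
          rw [hnmem y hy]
          by_cases hb0 : b = 0
          · have ha1 : a = 1 := by linarith
            have hxD : x ∉ D := fun h => hxy (by
              have heq : a • x + b • y = x := by rw [hb0, ha1]; simp
              rwa [heq])
            rw [hnmem x hxD, ha1]
            simp
          · rw [ENNReal.mul_top (ENNReal.ofReal_pos.2 (hb.lt_of_ne (Ne.symm hb0))).ne',
              add_top]
    -- φ₀ lsc
    have hφlsc : LowerSemicontinuous φ₀ := by
      intro x y hy
      by_cases hx : x ∈ D
      · rw [hmem x hx] at hy; exact absurd hy (by simp)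
      · have hop : IsOpen Dᶜ := hDclosed.isOpen_compl
        filter_upwards [hop.eventually_mem hx] with z hz
        rw [hnmem z hz]
        rw [hnmem x hx] at hy
        exact hy
    intro z hz
    by_contra hzD
    have : φ₀ z ≤ g z :=
      le_iSup (fun ψ : {φ : (ℝ × ℝ) → ℝ≥0∞ //
        (∀ x, φ x ≤ f₀ x) ∧ ConvexENN φ ∧ LowerSemicontinuous φ} => ψ.1 z)
        ⟨φ₀, hφle, hφconv, hφlsc⟩
    rw [hnmem z hzD] at this
    exact absurd (this.trans_lt hz) (lt_irrefl _)
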